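/- Two-point stationary states, decoupled case, part (b): assume D^{(12)} = 0 and fix i ∈ {1,2}. Then D^{(ii)} < 0 holds if and only if there exist a two-species distribution ρ and indices ι ≠ κ ∈ {1,2} such that simultaneously v^{(i)}_{ικ} > 0 and ρ^{(i)}(x_ι) = 0. -/

import Mathlib

/-!
For symmetric kernels with constant diagonal, the two-point velocity is
`v^{(i)}_{ικ} = ∑_k D^{(ik)} (ρ^{(k)}(x_ι) - ρ^{(k)}(x_κ))`. When `D^{(12)} = 0` only the term
`k = i` survives, and if `ρ^{(i)}(x_ι) = 0` then `ρ^{(i)}(x_κ) = 1`, so `v^{(i)}_{ικ} = -D^{(ii)}`.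
-/

open Finset

/-- The velocity `v^{(i)}_{ικ}` on the two-point space; `ρ k l` denotes the vertex *mass*
`ρ^{(k)}(x_l)`, so that `∑_λ (ΔK) ρ^{(k)}_λ μ_λ = ∑_l (ΔK) ρ k l`. -/
noncomputable def vel2 {d : ℕ} (x : Fin 2 → EuclideanSpace ℝ (Fin d))
    (K : Fin 2 → Fin 2 → EuclideanSpace ℝ (Fin d) → EuclideanSpace ℝ (Fin d) → ℝ)
    (ρ : Fin 2 → Fin 2 → ℝ) (i ι κ : Fin 2) : ℝ :=
  ∑ k : Fin 2, ∑ l : Fin 2, (K i k (x ι) (x l) - K i k (x κ) (x l)) * ρ k l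

/-- A two-species distribution on the two-point space, in terms of the vertex masses. -/
def IsDist2 (ρ : Fin 2 → Fin 2 → ℝ) : Prop :=
  (∀ i ι, 0 ≤ ρ i ι) ∧ ∀ i, ρ i 0 + ρ i 1 = 1

theorem sum_kernel_sub_mul_eq_of_ne {E : Type*} (x : Fin 2 → E) (k : E → E → ℝ)
    (hsym : ∀ p q, k p q = k q p) (hdiag : ∀ p q, k p p = k q q) (r : Fin 2 → ℝ)
    {ι κ : Fin 2} (hικ : ι ≠ κ) :
    ∑ l, (k (x ι) (x l) - k (x κ) (x l)) * r l =
      (k (x 0) (x 0) - k (x 0) (x 1)) * (r ι - r κ) := by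
  have hs := hsym (x 1) (x 0)
  have hd := hdiag (x 1) (x 0)
  fin_cases ι <;> fin_cases κ <;> simp_all [Fin.sum_univ_two] <;> ring

theorem IsDist2.eq_one_of_eq_zero {ρ : Fin 2 → Fin 2 → ℝ} (hρ : IsDist2 ρ) {i ι κ : Fin 2}
    (hικ : ι ≠ κ) (hzero : ρ i ι = 0) : ρ i κ = 1 := by
  have hsum := hρ.2 i
  fin_cases ι <;> fin_cases κ <;> simp_all

theorem isDist2_const_zero_one : IsDist2 fun _ => ![0, 1] :=
  ⟨fun _ ι => by fin_cases ι <;> simp, fun _ => by simp⟩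

section

variable {d : ℕ} (x : Fin 2 → EuclideanSpace ℝ (Fin d))
  (K : Fin 2 → Fin 2 → EuclideanSpace ℝ (Fin d) → EuclideanSpace ℝ (Fin d) → ℝ)

theorem vel2_eq_sum_of_ne (hKsym : ∀ i k p q, K i k p q = K i k q p)
    (hKdiag : ∀ i k p q, K i k p p = K i k q q) (ρ : Fin 2 → Fin 2 → ℝ) (i : Fin 2)
    {ι κ : Fin 2} (hικ : ι ≠ κ) :
    vel2 x K ρ i ι κ =
      ∑ k, (K i k (x 0) (x 0) - K i k (x 0) (x 1)) * (ρ k ι - ρ k κ) :=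
  Finset.sum_congr rfl fun k _ =>
    sum_kernel_sub_mul_eq_of_ne x (K i k) (hKsym i k) (hKdiag i k) (ρ k) hικ

theorem vel2_eq_of_decoupled (hKsym : ∀ i k p q, K i k p q = K i k q p)
    (hKdiag : ∀ i k p q, K i k p p = K i k q q) (ρ : Fin 2 → Fin 2 → ℝ) (i : Fin 2)
    (hdecoupled : ∀ k, k ≠ i → K i k (x 0) (x 0) = K i k (x 0) (x 1))
    {ι κ : Fin 2} (hικ : ι ≠ κ) :
    vel2 x K ρ i ι κ = (K i i (x 0) (x 0) - K i i (x 0) (x 1)) * (ρ i ι - ρ i κ) := by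
  rw [vel2_eq_sum_of_ne x K hKsym hKdiag ρ i hικ]
  exact Finset.sum_eq_single i (fun k _ hki => by rw [hdecoupled k hki, sub_self, zero_mul])
    (fun hi => absurd (Finset.mem_univ i) hi)

end

theorem two_point_stationary_decoupled_b_general
    (d : ℕ) (x : Fin 2 → EuclideanSpace ℝ (Fin d))
    (K : Fin 2 → Fin 2 → EuclideanSpace ℝ (Fin d) → EuclideanSpace ℝ (Fin d) → ℝ)
    (hKsym : ∀ i k p q, K i k p q = K i k q p)
    (hK12 : ∀ p q, K 0 1 p q = K 1 0 p q)
    (hKdiag : ∀ i k : Fin 2, ∀ p q : EuclideanSpace ℝ (Fin d), K i k p p = K i k q q)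
    (D : Fin 2 → Fin 2 → ℝ)
    (hD : ∀ i k, D i k = K i k (x 0) (x 0) - K i k (x 0) (x 1))
    (hD12 : D 0 1 = 0)
    (i : Fin 2) :
    D i i < 0 ↔
      ∃ ρ, IsDist2 ρ ∧ ∃ ι κ : Fin 2, ι ≠ κ ∧ 0 < vel2 x K ρ i ι κ ∧ ρ i ι = 0 := by
  have hdecoupled : ∀ k, k ≠ i → K i k (x 0) (x 0) = K i k (x 0) (x 1) := by
    rw [hD] at hD12
    intro k hki
    fin_cases i <;> fin_cases k
    all_goals first | exact absurd rfl hki | simp only [Fin.zero_eta, Fin.mk_one, ← hK12]; linarith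
  have hvel : ∀ ρ ι κ, ι ≠ κ → vel2 x K ρ i ι κ = D i i * (ρ i ι - ρ i κ) := fun ρ _ _ hικ => by
    rw [hD, vel2_eq_of_decoupled x K hKsym hKdiag ρ i hdecoupled hικ]
  constructor
  · intro hneg
    refine ⟨_, isDist2_const_zero_one, 0, 1, by decide, ?_, rfl⟩
    rw [hvel _ 0 1 (by decide)]
    simpa using hneg
  · rintro ⟨ρ, hρ, ι, κ, hικ, hv, hzero⟩
    rw [hvel ρ ι κ hικ, hzero, hρ.eq_one_of_eq_zero hικ hzero] at hv
    linarith

/-- Proposition 3.4 b) (decoupled case): if `D^{(12)} = 0` then `D^{(ii)} < 0` iff some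
distribution and some pair of distinct vertices satisfy simultaneously `v^{(i)}_{ικ} > 0`
and `ρ^{(i)}(x_ι) = 0`. -/
theorem two_point_stationary_decoupled_b
    (d : ℕ) (x : Fin 2 → EuclideanSpace ℝ (Fin d)) (hx : x 0 ≠ x 1)
    (μ : Fin 2 → ℝ) (hμ : ∀ ι, 0 < μ ι)
    (η12 : ℝ) (hη : 0 < η12)
    (K : Fin 2 → Fin 2 → EuclideanSpace ℝ (Fin d) → EuclideanSpace ℝ (Fin d) → ℝ)
    (hKsym : ∀ i k p q, K i k p q = K i k q p)
    (hK12 : ∀ p q, K 0 1 p q = K 1 0 p q)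
    (hKdiag : ∀ i k : Fin 2, ∀ p q : EuclideanSpace ℝ (Fin d), K i k p p = K i k q q)
    (D : Fin 2 → Fin 2 → ℝ)
    (hD : ∀ i k, D i k = K i k (x 0) (x 0) - K i k (x 0) (x 1))
    (hD12 : D 0 1 = 0)
    (i : Fin 2) :
    D i i < 0 ↔
      ∃ ρ, IsDist2 ρ ∧ ∃ ι κ : Fin 2, ι ≠ κ ∧ 0 < vel2 x K ρ i ι κ ∧ ρ i ι = 0 :=
  two_point_stationary_decoupled_b_general d x K hKsym hK12 hKdiag D hD hD12 i
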